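/- Let m_i, m_{i+1}, n_i, n_{i+1}, p ∈ ℕ with m_i ≥ 1 and p ≥ 1, let j ∈ ℕ with m_{i+1} ≤ j < m_i, assume n_{i+1} ≥ n_i, and let α ∈ ℕ with α > n_i + (n_{i+1}−n_i)(m_i−j)/(m_i−m_{i+1}); set d = α − n_i − (n_{i+1}−n_i)(m_i−j)/(m_i−m_{i+1}) > 0. Then for every real σ ≥ (p+d)/p one has k^j (l−p)^α / (k^{m_i} l^{n_i} + k^{m_{i+1}} l^{n_{i+1}}) ≤ (l!/(l−p)!)^{σ−1} for every (k,l) ∈ ℕ*×ℕ with l ≥ p. -/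

import Mathlib

/-!
The exponent `α - d` of `l` is chosen so that `(j, α - d)` lies on the segment joining
`(m_i, n_i)` and `(m_{i+1}, n_{i+1})`. Weighted AM–GM along that segment bounds the denominator
below by `k^j l^(α-d)`, so the quotient is at most `(l-p)^α / l^(α-d) ≤ (l-p)^d`. Finally
`(l-p)^p ≤ l!/(l-p)!`, whence `(l-p)^d ≤ (l!/(l-p)!)^(d/p) ≤ (l!/(l-p)!)^(σ-1)`.
-/

open Real

theorem Real.rpow_one_sub_mul_rpow_le_add {A B t : ℝ} (hA : 0 ≤ A) (hB : 0 ≤ B)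
    (ht₀ : 0 ≤ t) (ht₁ : t ≤ 1) : A ^ (1 - t) * B ^ t ≤ A + B :=
  calc A ^ (1 - t) * B ^ t ≤ (1 - t) * A + t * B :=
        geom_mean_le_arith_mean2_weighted (by linarith) ht₀ hA hB (by ring)
    _ ≤ A + B := by nlinarith

theorem Real.rpow_mul_rpow_le_add_of_mem_segment {x y m m' n n' j : ℝ} (hx : 0 < x) (hy : 0 < y)
    (hm'j : m' ≤ j) (hjm : j ≤ m) (hm : m' < m) :
    x ^ j * y ^ (n + (n' - n) * (m - j) / (m - m')) ≤ x ^ m * y ^ n + x ^ m' * y ^ n' := by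
  set t := (m - j) / (m - m') with ht
  have hmm' : 0 < m - m' := sub_pos.mpr hm
  have ht₀ : 0 ≤ t := div_nonneg (by linarith) hmm'.le
  have ht₁ : t ≤ 1 := (div_le_one hmm').mpr (by linarith)
  have hj : j = (1 - t) * m + t * m' := by rw [ht]; field_simp; ring
  have hn : n + (n' - n) * (m - j) / (m - m') = (1 - t) * n + t * n' := by
    rw [ht]; field_simp; ring
  have hsplit : x ^ j * y ^ (n + (n' - n) * (m - j) / (m - m')) =
      (x ^ m * y ^ n) ^ (1 - t) * (x ^ m' * y ^ n') ^ t := by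
    rw [mul_rpow (by positivity) (by positivity), mul_rpow (by positivity) (by positivity),
      ← rpow_mul hx.le, ← rpow_mul hy.le, ← rpow_mul hx.le, ← rpow_mul hy.le, hn, hj,
      rpow_add hx, rpow_add hy]
    ring_nf
  rw [hsplit]
  exact rpow_one_sub_mul_rpow_le_add (by positivity) (by positivity) ht₀ ht₁

theorem Real.rpow_add_le_mul_rpow_of_le {q l a b : ℝ} (hq : 0 ≤ q) (hql : q ≤ l) (ha : 0 ≤ a)
    (hab : a + b ≠ 0) : q ^ (a + b) ≤ l ^ a * q ^ b := by
  rw [rpow_add' hq hab]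
  exact mul_le_mul_of_nonneg_right (rpow_le_rpow hq hql ha) (rpow_nonneg hq b)

theorem Real.rpow_le_rpow_of_pow_le {q F d s : ℝ} {p : ℕ} (hq : 0 ≤ q) (hp : p ≠ 0)
    (hqF : q ^ p ≤ F) (hF : 1 ≤ F) (hd : 0 ≤ d) (hds : d / p ≤ s) : q ^ d ≤ F ^ s :=
  calc q ^ d = (q ^ p) ^ (d / p) := by
        rw [← rpow_natCast, ← rpow_mul hq, mul_div_cancel₀ _ (by exact_mod_cast hp)]
    _ ≤ F ^ (d / p) := rpow_le_rpow (by positivity) hqF (by positivity)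
    _ ≤ F ^ s := rpow_le_rpow_of_exponent_le hF hds

theorem Nat.cast_factorial_div_factorial_sub {l p : ℕ} (h : p ≤ l) :
    (l.factorial : ℝ) / ((l - p).factorial : ℝ) = l.descFactorial p := by
  rw [div_eq_iff (by positivity), ← Nat.factorial_mul_descFactorial h]
  push_cast
  ring

theorem Nat.sub_pow_le_descFactorial (l p : ℕ) : (l - p) ^ p ≤ l.descFactorial p :=
  (Nat.pow_le_pow_left (by omega) p).trans (Nat.pow_sub_le_descFactorial l p)

theorem young_newton_side_estimate_general (mi mi1 ni ni1 p j α : ℕ)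
    (hp : 1 ≤ p) (hj1 : mi1 ≤ j) (hj2 : j < mi) (hn : ni ≤ ni1)
    (hα : (ni : ℝ) + ((ni1 : ℝ) - (ni : ℝ)) * ((mi : ℝ) - (j : ℝ)) /
            ((mi : ℝ) - (mi1 : ℝ)) < (α : ℝ))
    (d σ : ℝ)
    (hd : d = (α : ℝ) - (ni : ℝ) - ((ni1 : ℝ) - (ni : ℝ)) * ((mi : ℝ) - (j : ℝ)) /
            ((mi : ℝ) - (mi1 : ℝ)))
    (hσ : ((p : ℝ) + d) / (p : ℝ) ≤ σ) :
    ∀ k l : ℕ, 1 ≤ k → p ≤ l →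
      (k : ℝ) ^ j * ((l - p : ℕ) : ℝ) ^ α /
          ((k : ℝ) ^ mi * (l : ℝ) ^ ni + (k : ℝ) ^ mi1 * (l : ℝ) ^ ni1) ≤
        ((l.factorial : ℝ) / ((l - p).factorial : ℝ)) ^ (σ - 1) := by
  intro k l hk hl
  set e : ℝ := ni + (ni1 - ni) * (mi - j) / (mi - mi1)
  have hk₀ : (0 : ℝ) < k := by exact_mod_cast hk
  have hl₀ : (0 : ℝ) < l := by exact_mod_cast hp.trans hl
  have hmi1 : (mi1 : ℝ) < mi := by exact_mod_cast hj1.trans_lt hj2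
  have he : 0 ≤ e := add_nonneg (Nat.cast_nonneg _) <| div_nonneg
    (mul_nonneg (sub_nonneg.2 (by exact_mod_cast hn)) (sub_nonneg.2 (by exact_mod_cast hj2.le)))
    (sub_pos.2 hmi1).le
  have hd₀ : 0 < d := by linarith
  have hαed : (α : ℝ) = e + d := by linarith
  have hden : (k : ℝ) ^ j * (l : ℝ) ^ e ≤
      (k : ℝ) ^ mi * (l : ℝ) ^ ni + (k : ℝ) ^ mi1 * (l : ℝ) ^ ni1 := by
    have := rpow_mul_rpow_le_add_of_mem_segment (n := ni) (n' := ni1) hk₀ hl₀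
      (by exact_mod_cast hj1 : (mi1 : ℝ) ≤ j) (by exact_mod_cast hj2.le) hmi1
    simpa only [rpow_natCast] using this
  have hF : ((l - p : ℕ) : ℝ) ^ d ≤ ((l.factorial : ℝ) / ((l - p).factorial : ℝ)) ^ (σ - 1) := by
    rw [Nat.cast_factorial_div_factorial_sub hl]
    refine rpow_le_rpow_of_pow_le (p := p) (by positivity) (by omega)
      (by exact_mod_cast Nat.sub_pow_le_descFactorial l p)
      (by exact_mod_cast Nat.descFactorial_pos.mpr hl) hd₀.le ?_
    rw [add_div, div_self (by positivity)] at hσ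
    linarith
  rw [div_le_iff₀ (by positivity)]
  calc (k : ℝ) ^ j * ((l - p : ℕ) : ℝ) ^ α = (k : ℝ) ^ j * ((l - p : ℕ) : ℝ) ^ (e + d) := by
        rw [← hαed, rpow_natCast]
    _ ≤ (k : ℝ) ^ j * ((l : ℝ) ^ e * ((l - p : ℕ) : ℝ) ^ d) := by
        gcongr
        exact rpow_add_le_mul_rpow_of_le (by positivity) (by exact_mod_cast Nat.sub_le l p) he
          (by linarith)
    _ = (k : ℝ) ^ j * (l : ℝ) ^ e * ((l - p : ℕ) : ℝ) ^ d := by ring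
    _ ≤ _ := by rw [mul_comm _ ((k : ℝ) ^ mi * _ + _)]; gcongr

/-- **Lemma 3.7** (Lastra–Tahara). Let `m_i, m_{i+1}, n_i, n_{i+1}, p ∈ ℕ` with
`m_i ≥ 1`, `p ≥ 1`, let `m_{i+1} ≤ j < m_i`, `n_{i+1} ≥ n_i`, and
`α > n_i + (n_{i+1}−n_i)(m_i−j)/(m_i−m_{i+1})`; set
`d = α − n_i − (n_{i+1}−n_i)(m_i−j)/(m_i−m_{i+1})`. If `σ ≥ (p+d)/p`, then
`k^j (l−p)^α / (k^{m_i} l^{n_i} + k^{m_{i+1}} l^{n_{i+1}}) ≤ (l!/(l−p)!)^{σ−1}`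
for all `(k,l) ∈ ℕ* × ℕ` with `l ≥ p`. -/
theorem young_newton_side_estimate (mi mi1 ni ni1 p j α : ℕ)
    (hmi : 1 ≤ mi) (hp : 1 ≤ p) (hj1 : mi1 ≤ j) (hj2 : j < mi) (hn : ni ≤ ni1)
    (hα : (ni : ℝ) + ((ni1 : ℝ) - (ni : ℝ)) * ((mi : ℝ) - (j : ℝ)) /
            ((mi : ℝ) - (mi1 : ℝ)) < (α : ℝ))
    (d σ : ℝ)
    (hd : d = (α : ℝ) - (ni : ℝ) - ((ni1 : ℝ) - (ni : ℝ)) * ((mi : ℝ) - (j : ℝ)) /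
            ((mi : ℝ) - (mi1 : ℝ)))
    (hσ : ((p : ℝ) + d) / (p : ℝ) ≤ σ) :
    ∀ k l : ℕ, 1 ≤ k → p ≤ l →
      (k : ℝ) ^ j * ((l - p : ℕ) : ℝ) ^ α /
          ((k : ℝ) ^ mi * (l : ℝ) ^ ni + (k : ℝ) ^ mi1 * (l : ℝ) ^ ni1) ≤
        ((l.factorial : ℝ) / ((l - p).factorial : ℝ)) ^ (σ - 1) :=
  young_newton_side_estimate_general mi mi1 ni ni1 p j α hp hj1 hj2 hn hα d σ hd hσ
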